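/- arXiv:2604.21132 — 2 statements merged into one kernel-verified Lean document; each statement's English description precedes it below -/
import Mathlib

section
/- Let f : ℝⁿ → ℝ be differentiable, convex, and L-smooth. Suppose x⁺ ∈ ℝⁿ satisfies ⟨∇f(x⁺), x⁺ - x⟩ = 0 and ⟨∇f(x⁺), ∇f(x)⟩ = 0. Then f(x) - f(x⁺) ≥ (‖∇f(x⁺)‖² + ‖∇f(x)‖²)/(2L). -/
/-!
Evaluating the convexity inequality at `x⁺` and the quadratic upper bound of `L`-smoothness at `x`
at the common point `u = x - L⁻¹ (∇f(x) - ∇f(x⁺))` sandwiches `f u` and yields the Baillon–Haddad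
inequality `f(x) ≥ f(x⁺) + ⟨∇f(x⁺), x - x⁺⟩ + ‖∇f(x) - ∇f(x⁺)‖² / (2L)`. The two orthogonality
hypotheses kill the inner product and split the squared norm into `‖∇f(x⁺)‖² + ‖∇f(x)‖²`.
-/

open RealInnerProductSpace

section

variable {E : Type*} [NormedAddCommGroup E] [InnerProductSpace ℝ E] [CompleteSpace E]
  {f : E → ℝ} {g : E → E} {L : ℝ}

theorem HasGradientAt.hasDerivAt_comp_add_smul {f' x v : E} {t : ℝ}
    (h : HasGradientAt f f' (x + t • v)) :
    HasDerivAt (fun s : ℝ => f (x + s • v)) ⟪f', v⟫ t := by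
  have hline : HasDerivAt (fun s : ℝ => x + s • v) v t := by
    simpa using ((hasDerivAt_id t).smul_const v).const_add x
  have hcomp := h.hasFDerivAt.comp_hasDerivAt t hline
  simp only [InnerProductSpace.toDual_apply_apply] at hcomp
  exact hcomp

theorem le_add_inner_add_sq_of_lipschitz_gradient (hgrad : ∀ x, HasGradientAt f (g x) x)
    (hsmooth : ∀ x y, ‖g x - g y‖ ≤ L * ‖x - y‖) (x y : E) :
    f y ≤ f x + ⟪g x, y - x⟫ + L / 2 * ‖y - x‖ ^ 2 := by
  set v := y - x
  let ψ : ℝ → ℝ := fun t => f (x + t • v) - t * ⟪g x, v⟫ - L / 2 * t ^ 2 * ‖v‖ ^ 2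
  have hψ : ∀ t, HasDerivAt ψ (⟪g (x + t • v) - g x, v⟫ - L * t * ‖v‖ ^ 2) t := by
    intro t
    refine ((((hgrad (x + t • v)).hasDerivAt_comp_add_smul).sub
      ((hasDerivAt_id t).mul_const ⟪g x, v⟫)).sub
      (((hasDerivAt_pow 2 t).const_mul (L / 2)).mul_const (‖v‖ ^ 2))).congr_deriv ?_
    simp only [inner_sub_left]
    ring
  have hψ_nonpos : ∀ t ∈ interior (Set.Ici (0 : ℝ)),
      ⟪g (x + t • v) - g x, v⟫ - L * t * ‖v‖ ^ 2 ≤ 0 := by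
    intro t ht
    rw [interior_Ici, Set.mem_Ioi] at ht
    have : ⟪g (x + t • v) - g x, v⟫ ≤ L * t * ‖v‖ ^ 2 := calc
      _ ≤ ‖g (x + t • v) - g x‖ * ‖v‖ := real_inner_le_norm _ _
      _ ≤ L * ‖x + t • v - x‖ * ‖v‖ := by gcongr; exact hsmooth _ _
      _ = L * t * ‖v‖ ^ 2 := by simp [norm_smul, abs_of_pos ht]; ring
    linarith
  have hanti : AntitoneOn ψ (Set.Ici 0) :=
    antitoneOn_of_hasDerivWithinAt_nonpos (convex_Ici 0)
      (fun t _ => (hψ t).continuousAt.continuousWithinAt)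
      (fun t _ => (hψ t).hasDerivWithinAt) hψ_nonpos
  have h01 : ψ 1 ≤ ψ 0 := hanti Set.self_mem_Ici (Set.mem_Ici.2 zero_le_one) zero_le_one
  simp [ψ, v] at h01
  linarith

theorem add_inner_add_sq_div_le_of_lipschitz_gradient (hL : 0 < L)
    (hgrad : ∀ x, HasGradientAt f (g x) x)
    (hconv : ∀ x y, f y ≥ f x + ⟪g x, y - x⟫)
    (hsmooth : ∀ x y, ‖g x - g y‖ ≤ L * ‖x - y‖) (x y : E) :
    f x + ⟪g x, y - x⟫ + ‖g y - g x‖ ^ 2 / (2 * L) ≤ f y := by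
  set d := g y - g x
  set u := y - L⁻¹ • d with hu
  have hlower := hconv x u
  have hupper := le_add_inner_add_sq_of_lipschitz_gradient hgrad hsmooth y u
  have hu_sub_x : u - x = (y - x) - L⁻¹ • d := by rw [hu]; abel
  have hu_sub_y : u - y = -(L⁻¹ • d) := by rw [hu]; abel
  have hux : ⟪g x, u - x⟫ = ⟪g x, y - x⟫ - L⁻¹ * ⟪g x, d⟫ := by
    rw [hu_sub_x, inner_sub_right, real_inner_smul_right]
  have huy : ⟪g y, u - y⟫ = -(L⁻¹ * ⟪g y, d⟫) := by
    rw [hu_sub_y, inner_neg_right, real_inner_smul_right]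
  have hnorm : ‖u - y‖ ^ 2 = L⁻¹ ^ 2 * ‖d‖ ^ 2 := by
    rw [hu_sub_y, norm_neg, norm_smul, mul_pow, Real.norm_eq_abs, sq_abs]
  have hd : ⟪g y, d⟫ - ⟪g x, d⟫ = ‖d‖ ^ 2 := by
    rw [← inner_sub_left, real_inner_self_eq_norm_sq]
  rw [hux] at hlower
  rw [huy, hnorm] at hupper
  have hcoef : L / 2 * (L⁻¹ ^ 2 * ‖d‖ ^ 2) = ‖d‖ ^ 2 / (2 * L) := by
    field_simp
  linear_combination hlower + hupper - L⁻¹ * hd + hcoef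

end

/-- Baillon–Haddad descent under double orthogonality. -/
theorem stmt_5 {n : ℕ} (f : EuclideanSpace ℝ (Fin n) → ℝ)
    (g : EuclideanSpace ℝ (Fin n) → EuclideanSpace ℝ (Fin n)) (L : ℝ) (hL : 0 < L)
    (hgrad : ∀ x, HasGradientAt f (g x) x)
    (hconv : ∀ x y : EuclideanSpace ℝ (Fin n), f y ≥ f x + ⟪g x, y - x⟫)
    (hsmooth : ∀ x y : EuclideanSpace ℝ (Fin n), ‖g x - g y‖ ≤ L * ‖x - y‖)
    (x xp : EuclideanSpace ℝ (Fin n))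
    (horth1 : ⟪g xp, xp - x⟫ = 0) (horth2 : ⟪g xp, g x⟫ = 0) :
    f x - f xp ≥ (‖g xp‖ ^ 2 + ‖g x‖ ^ 2) / (2 * L) := by
  have hbh := add_inner_add_sq_div_le_of_lipschitz_gradient hL hgrad hconv hsmooth xp x
  have hinner : ⟪g xp, x - xp⟫ = 0 := by
    rw [← neg_sub, inner_neg_right, horth1, neg_zero]
  have hnorm : ‖g x - g xp‖ ^ 2 = ‖g xp‖ ^ 2 + ‖g x‖ ^ 2 := by
    rw [norm_sub_sq_real, real_inner_comm, horth2]
    ring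
  rw [hinner, hnorm] at hbh
  linarith
end

section
/- Let f : ℝⁿ → ℝ be differentiable, μ-strongly convex, and L-smooth with minimizer x* and κ = L/μ. Let x with ∇f(x) ≠ 0, let y = x - t∇f(x) with f(y) = f(x), suppose ∇f(x) and ∇f(y) are linearly independent with angle θ ∈ (0, π), and let x⁺ minimize f over Π = {x + α∇f(x) + β∇f(y) : α, β ∈ ℝ}. Then f(x⁺) - f(x*) ≤ ((κ-1)/(κ+1) - sin²θ/(4κ²)) (f(x) - f(x*)). -/
/-!
Let `a = x - s₁ ∇f x` and `b = y - s₂ ∇f y` be the exact line-search points from `x` and `y`.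
Both lie in the plane `Π`, and interpolation together with the Polyak–Łojasiewicz
inequality shows that each contracts the gap by `(κ - 1) / (κ + 1)` (for `b` because
`f y = f x`). By strong convexity, `f` at the midpoint of `a` and `b` is below the average of
`f a` and `f b` by `μ ‖a - b‖² / 8`. Finally `a - b = (t - s₁) ∇f x + s₂ ∇f y` is at least as
long as the component of `s₂ ∇f y` orthogonal to `∇f x`, of length `|s₂| ‖∇f y‖ sin θ`, where
`|s₂| ≥ 1 / L` and `‖∇f y‖² ≥ 2 μ (f x - f x*)`.
-/

open RealInnerProductSpace InnerProductGeometry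

section

variable {E : Type*} [NormedAddCommGroup E] [InnerProductSpace ℝ E]

theorem hasDerivAt_comp_line [CompleteSpace E] {f : E → ℝ} {g : E → E}
    (hgrad : ∀ x, HasGradientAt f (g x) x) (v d : E) (s : ℝ) :
    HasDerivAt (fun s : ℝ => f (v + s • d)) ⟪g (v + s • d), d⟫ s := by
  have hline : HasDerivAt (fun s : ℝ => v + s • d) d s := by
    simpa using ((hasDerivAt_id s).smul_const d).const_add v
  simpa [Function.comp_def] using (hgrad (v + s • d)).hasFDerivAt.comp_hasDerivAt s hline

theorem apply_le_of_lipschitz_gradient [CompleteSpace E] {f : E → ℝ} {g : E → E} {L : ℝ}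
    (hgrad : ∀ x, HasGradientAt f (g x) x) (hsmooth : ∀ x y, ‖g x - g y‖ ≤ L * ‖x - y‖)
    (v w : E) : f w ≤ f v + ⟪g v, w - v⟫ + L / 2 * ‖w - v‖ ^ 2 := by
  set d := w - v
  set φ : ℝ → ℝ := fun s => f (v + s • d) - s * ⟪g v, d⟫ - L / 2 * s ^ 2 * ‖d‖ ^ 2
  have hφ : ∀ s, HasDerivAt φ (⟪g (v + s • d), d⟫ - ⟪g v, d⟫ - L * s * ‖d‖ ^ 2) s := by
    intro s
    refine (((hasDerivAt_comp_line hgrad v d s).sub ((hasDerivAt_id' s).mul_const ⟪g v, d⟫)).sub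
      (((hasDerivAt_pow 2 s).const_mul (L / 2)).mul_const (‖d‖ ^ 2))).congr_deriv ?_
    push_cast; ring
  obtain ⟨c, hc, hslope⟩ := exists_hasDerivAt_eq_slope φ _ zero_lt_one
    (fun s _ => (hφ s).continuousAt.continuousWithinAt) (fun s _ => hφ s)
  -- Lipschitz continuity of `g` makes `φ'` nonpositive on `(0, 1)`.
  have hφ'c : ⟪g (v + c • d), d⟫ - ⟪g v, d⟫ - L * c * ‖d‖ ^ 2 ≤ 0 := by
    have hlip : ‖g (v + c • d) - g v‖ ≤ L * (c * ‖d‖) := by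
      simpa [norm_smul, abs_of_pos hc.1] using hsmooth (v + c • d) v
    have := real_inner_le_norm (g (v + c • d) - g v) d
    rw [inner_sub_left] at this
    nlinarith [norm_nonneg d]
  have hφ10 : φ 1 ≤ φ 0 := by
    rw [hslope] at hφ'c
    linarith
  simp only [φ, one_smul, zero_smul, add_zero] at hφ10
  rw [add_sub_cancel] at hφ10
  linarith

theorem apply_add_inner_add_norm_sq_le [CompleteSpace E] {f : E → ℝ} {g : E → E} {μ L : ℝ}
    (hμ : 0 ≤ μ) (hL : 0 < L) (hgrad : ∀ x, HasGradientAt f (g x) x)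
    (hsc : ∀ x y : E, f y ≥ f x + ⟪g x, y - x⟫ + μ / 2 * ‖y - x‖ ^ 2)
    (hsmooth : ∀ x y, ‖g x - g y‖ ≤ L * ‖x - y‖) (u v : E) :
    f u + ⟪g u, v - u⟫ + 1 / (2 * L) * ‖g v - g u‖ ^ 2 ≤ f v := by
  -- Compare `f` at `w := v - (g v - g u) / L` from above (descent lemma at `v`) and
  -- from below (convexity at `u`).
  set w := v - (1 / L) • (g v - g u)
  have hdesc := apply_le_of_lipschitz_gradient hgrad hsmooth v w
  have hconv : f u + ⟪g u, w - u⟫ ≤ f w := by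
    have : 0 ≤ μ / 2 * ‖w - u‖ ^ 2 := by positivity
    linarith [hsc u w]
  have hwv : w - v = -((1 / L) • (g v - g u)) := by simp [w]
  have hwu : w - u = (v - u) - (1 / L) • (g v - g u) := by simp [w]; abel
  rw [hwv, inner_neg_right, real_inner_smul_right, norm_neg, norm_smul, Real.norm_eq_abs,
    abs_of_pos (one_div_pos.mpr hL)] at hdesc
  rw [hwu, inner_sub_right, real_inner_smul_right] at hconv
  have hsq : ⟪g v, g v - g u⟫ - ⟪g u, g v - g u⟫ = ‖g v - g u‖ ^ 2 := by
    rw [← inner_sub_left, real_inner_self_eq_norm_sq]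
  field_simp at hdesc hconv ⊢
  linarith

theorem two_mul_sub_le_norm_sq {f : E → ℝ} {g : E → E} {μ : ℝ} (hμ : 0 < μ)
    (hsc : ∀ x y : E, f y ≥ f x + ⟪g x, y - x⟫ + μ / 2 * ‖y - x‖ ^ 2) (u z : E) :
    2 * μ * (f u - f z) ≤ ‖g u‖ ^ 2 := by
  have hcs : -(‖g u‖ * ‖z - u‖) ≤ ⟪g u, z - u⟫ := neg_le_of_abs_le (abs_real_inner_le_norm _ _)
  nlinarith [hsc u z, sq_nonneg (‖g u‖ - μ * ‖z - u‖)]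

theorem mul_norm_sub_sq_le_inner_sub_sub {f : E → ℝ} {g : E → E} {μ : ℝ}
    (hsc : ∀ x y : E, f y ≥ f x + ⟪g x, y - x⟫ + μ / 2 * ‖y - x‖ ^ 2) (x y : E) :
    μ * ‖x - y‖ ^ 2 ≤ ⟪g x - g y, x - y⟫ := by
  have hxy := hsc x y
  have hyx := hsc y x
  rw [← neg_sub x y, inner_neg_right, norm_neg] at hxy
  rw [inner_sub_left]
  linarith

/-- An exact line search along `-g u` stops where the new gradient is orthogonal to `g u`. -/
theorem exists_inner_apply_sub_smul_eq_zero {g : E → E} {μ : ℝ} (hμ : 0 < μ)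
    (hg : Continuous g) (hmono : ∀ x y, μ * ‖x - y‖ ^ 2 ≤ ⟪g x - g y, x - y⟫) (u : E) :
    ∃ s : ℝ, ⟪g (u - s • g u), g u⟫ = 0 := by
  set φ : ℝ → ℝ := fun s => ⟪g (u - s • g u), g u⟫
  have hφ : Continuous φ := by fun_prop
  have hφ0 : 0 ≤ φ 0 := by simp [φ]
  have hφμ : φ μ⁻¹ ≤ 0 := by
    have h := hmono (u - μ⁻¹ • g u) u
    rw [sub_sub_cancel_left, inner_neg_right, inner_sub_left, real_inner_smul_right,
      real_inner_smul_right, norm_neg, norm_smul, mul_pow, Real.norm_eq_abs, sq_abs,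
      real_inner_self_eq_norm_sq] at h
    have hμ' : μ * (μ⁻¹ ^ 2 * ‖g u‖ ^ 2) = μ⁻¹ * ‖g u‖ ^ 2 := by field_simp
    have : 0 ≤ -(μ⁻¹ * φ μ⁻¹) := by simp only [φ]; linarith
    nlinarith [inv_pos.mpr hμ]
  obtain ⟨s, -, hs⟩ := intermediate_value_Icc' (inv_pos.mpr hμ).le hφ.continuousOn ⟨hφμ, hφ0⟩
  exact ⟨s, hs⟩

theorem sub_le_mul_sub_of_inner_eq_zero [CompleteSpace E] {f : E → ℝ} {g : E → E} {μ L : ℝ}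
    (hμ : 0 < μ) (hL : 0 < L) (hgrad : ∀ x, HasGradientAt f (g x) x)
    (hsc : ∀ x y : E, f y ≥ f x + ⟪g x, y - x⟫ + μ / 2 * ‖y - x‖ ^ 2)
    (hsmooth : ∀ x y, ‖g x - g y‖ ≤ L * ‖x - y‖) (z u : E) {s : ℝ}
    (horth : ⟪g (u - s • g u), g u⟫ = 0) :
    f (u - s • g u) - f z ≤ (L - μ) / (L + μ) * (f u - f z) := by
  set u' := u - s • g u
  have hinterp := apply_add_inner_add_norm_sq_le hμ.le hL hgrad hsc hsmooth u' u
  rw [show u - u' = s • g u by simp [u'], real_inner_smul_right, horth, mul_zero,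
    norm_sub_sq_real, real_inner_comm, horth] at hinterp
  have hpl := two_mul_sub_le_norm_sq hμ hsc u z
  have hpl' := two_mul_sub_le_norm_sq hμ hsc u' z
  rw [div_mul_eq_mul_div, le_div_iff₀ (by positivity)]
  field_simp at hinterp
  nlinarith

/-- The step bound `|s| ≥ 1 / L`, in a form that needs no `g u ≠ 0`. -/
theorem norm_sq_le_sq_mul_norm_sq_of_inner_eq_zero {g : E → E} {L : ℝ}
    (hsmooth : ∀ x y, ‖g x - g y‖ ≤ L * ‖x - y‖) {u : E} {s : ℝ}
    (horth : ⟪g (u - s • g u), g u⟫ = 0) :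
    ‖g u‖ ^ 2 ≤ (L * s) ^ 2 * ‖g u‖ ^ 2 := by
  have hlip : ‖g u - g (u - s • g u)‖ ≤ L * (|s| * ‖g u‖) := by
    simpa [norm_smul] using hsmooth u (u - s • g u)
  have hpyth : ‖g u - g (u - s • g u)‖ ^ 2 = ‖g u‖ ^ 2 + ‖g (u - s • g u)‖ ^ 2 := by
    rw [norm_sub_sq_real, real_inner_comm, horth]; ring
  calc ‖g u‖ ^ 2 ≤ ‖g u - g (u - s • g u)‖ ^ 2 := by
        rw [hpyth]; nlinarith [norm_nonneg (g (u - s • g u))]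
    _ ≤ (L * (|s| * ‖g u‖)) ^ 2 := pow_le_pow_left₀ (norm_nonneg _) hlip 2
    _ = (L * s) ^ 2 * ‖g u‖ ^ 2 := by rw [mul_pow, mul_pow, mul_pow, sq_abs]; ring

/-- `d² ‖v‖² sin² ∠(u, v)` is the squared distance from `d • v` to the line `ℝ u`. -/
theorem sq_mul_norm_sq_mul_sin_angle_sq_le (u v : E) (c d : ℝ) :
    d ^ 2 * ‖v‖ ^ 2 * Real.sin (angle u v) ^ 2 ≤ ‖c • u + d • v‖ ^ 2 := by
  rcases eq_or_ne u 0 with rfl | hu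
  · simp [norm_smul, mul_pow]
  have hcos := cos_angle_mul_norm_mul_norm u v
  have hu2 : 0 < ‖u‖ ^ 2 := by positivity
  have hexp : ‖u‖ ^ 2 * ‖c • u + d • v‖ ^ 2
      = (c * ‖u‖ ^ 2 + d * ⟪u, v⟫) ^ 2 + d ^ 2 * (‖u‖ ^ 2 * ‖v‖ ^ 2 - ⟪u, v⟫ ^ 2) := by
    rw [norm_add_sq_real, norm_smul, norm_smul, real_inner_smul_left, real_inner_smul_right,
      Real.norm_eq_abs, Real.norm_eq_abs, mul_pow, mul_pow, sq_abs, sq_abs]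
    ring
  have hsin :
      ‖u‖ ^ 2 * ‖v‖ ^ 2 - ⟪u, v⟫ ^ 2 = Real.sin (angle u v) ^ 2 * (‖u‖ ^ 2 * ‖v‖ ^ 2) := by
    rw [← hcos, Real.sin_sq]; ring
  refine le_of_mul_le_mul_left ?_ hu2
  rw [hexp, hsin]
  nlinarith [sq_nonneg (c * ‖u‖ ^ 2 + d * ⟪u, v⟫)]

theorem two_mul_apply_midpoint_le {f : E → ℝ} {g : E → E} {μ : ℝ}
    (hsc : ∀ x y : E, f y ≥ f x + ⟪g x, y - x⟫ + μ / 2 * ‖y - x‖ ^ 2) (a b : E) :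
    2 * f (midpoint ℝ a b) ≤ f a + f b - μ / 4 * ‖a - b‖ ^ 2 := by
  set m := midpoint ℝ a b
  have hm : m = (2⁻¹ : ℝ) • (a + b) := by simp only [m, midpoint_eq_smul_add, invOf_eq_inv]
  have ha : a - m = (2⁻¹ : ℝ) • (a - b) := by rw [hm]; module
  have hb : b - m = -((2⁻¹ : ℝ) • (a - b)) := by rw [hm]; module
  have hfa := hsc m a
  have hfb := hsc m b
  rw [ha, norm_smul, inner_smul_right] at hfa
  rw [hb, norm_neg, norm_smul, inner_neg_right, inner_smul_right] at hfb
  norm_num at hfa hfb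
  linarith

end

theorem stmt_19_general {n : ℕ} (f : EuclideanSpace ℝ (Fin n) → ℝ)
    (g : EuclideanSpace ℝ (Fin n) → EuclideanSpace ℝ (Fin n)) (μ L : ℝ)
    (hμ : 0 < μ) (hμL : μ ≤ L)
    (hgrad : ∀ x, HasGradientAt f (g x) x)
    (hsc : ∀ x y : EuclideanSpace ℝ (Fin n),
      f y ≥ f x + ⟪g x, y - x⟫ + μ / 2 * ‖y - x‖ ^ 2)
    (hsmooth : ∀ x y : EuclideanSpace ℝ (Fin n), ‖g x - g y‖ ≤ L * ‖x - y‖)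
    (xs : EuclideanSpace ℝ (Fin n))
    (x : EuclideanSpace ℝ (Fin n))
    (t : ℝ) (y : EuclideanSpace ℝ (Fin n)) (hy : y = x - t • g x)
    (hlevel : f y = f x)
    (xp : EuclideanSpace ℝ (Fin n))
    (hpmin : ∀ α β : ℝ, f xp ≤ f (x + α • g x + β • g y)) :
    f xp - f xs ≤
      ((L / μ - 1) / (L / μ + 1) -
        Real.sin (InnerProductGeometry.angle (g x) (g y)) ^ 2 / (4 * (L / μ) ^ 2)) *
        (f x - f xs) := by
  have hL : 0 < L := hμ.trans_le hμL
  have hg : Continuous g :=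
    (LipschitzWith.of_dist_le' fun u v => by simpa only [dist_eq_norm] using hsmooth u v).continuous
  have hmono := mul_norm_sub_sq_le_inner_sub_sub hsc
  obtain ⟨s₁, horth₁⟩ := exists_inner_apply_sub_smul_eq_zero hμ hg hmono x
  obtain ⟨s₂, horth₂⟩ := exists_inner_apply_sub_smul_eq_zero hμ hg hmono y
  set a := x - s₁ • g x
  set b := y - s₂ • g y
  have hfa := sub_le_mul_sub_of_inner_eq_zero hμ hL hgrad hsc hsmooth xs x horth₁
  have hfb := sub_le_mul_sub_of_inner_eq_zero hμ hL hgrad hsc hsmooth xs y horth₂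
  rw [hlevel] at hfb
  have hfp : f xp ≤ f (midpoint ℝ a b) := by
    convert hpmin (-(s₁ + t) / 2) (-s₂ / 2) using 2
    simp only [a, b, midpoint_eq_smul_add, invOf_eq_inv]
    rw [hy]
    module
  have hmid := two_mul_apply_midpoint_le hsc a b
  set S := Real.sin (angle (g x) (g y)) ^ 2
  have hsep : 2 * μ * (f x - f xs) * S / L ^ 2 ≤ ‖a - b‖ ^ 2 := by
    have hab : a - b = (t - s₁) • g x + s₂ • g y := by simp only [a, b]; rw [hy]; module
    have hpl := two_mul_sub_le_norm_sq hμ hsc y xs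
    rw [hlevel] at hpl
    have hstep := norm_sq_le_sq_mul_norm_sq_of_inner_eq_zero hsmooth horth₂
    rw [div_le_iff₀ (by positivity), hab]
    calc 2 * μ * (f x - f xs) * S ≤ ‖g y‖ ^ 2 * S := by gcongr
      _ ≤ (L * s₂) ^ 2 * ‖g y‖ ^ 2 * S := by gcongr
      _ ≤ ‖(t - s₁) • g x + s₂ • g y‖ ^ 2 * L ^ 2 := by
        linarith [mul_le_mul_of_nonneg_left
          (sq_mul_norm_sq_mul_sin_angle_sq_le (g x) (g y) (t - s₁) s₂) (sq_nonneg L)]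
  have hcoef : (L / μ - 1) / (L / μ + 1) - S / (4 * (L / μ) ^ 2)
      = (L - μ) / (L + μ) - μ ^ 2 * S / (4 * L ^ 2) := by
    field_simp
  rw [hcoef]
  linear_combination hfp + hmid / 2 + hfa / 2 + hfb / 2 + μ / 8 * hsep

/-- Improved per-step rate via level-set symmetry:
f(x⁺) - f(x*) ≤ ((κ-1)/(κ+1) - sin²θ/(4κ²)) (f(x) - f(x*)), κ = L/μ. -/
theorem stmt_19 {n : ℕ} (f : EuclideanSpace ℝ (Fin n) → ℝ)
    (g : EuclideanSpace ℝ (Fin n) → EuclideanSpace ℝ (Fin n)) (μ L : ℝ)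
    (hμ : 0 < μ) (hμL : μ ≤ L)
    (hgrad : ∀ x, HasGradientAt f (g x) x)
    (hsc : ∀ x y : EuclideanSpace ℝ (Fin n),
      f y ≥ f x + ⟪g x, y - x⟫ + μ / 2 * ‖y - x‖ ^ 2)
    (hsmooth : ∀ x y : EuclideanSpace ℝ (Fin n), ‖g x - g y‖ ≤ L * ‖x - y‖)
    (xs : EuclideanSpace ℝ (Fin n)) (hmin : ∀ z, f xs ≤ f z)
    (x : EuclideanSpace ℝ (Fin n)) (hx : g x ≠ 0)
    (t : ℝ) (y : EuclideanSpace ℝ (Fin n)) (hy : y = x - t • g x)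
    (hlevel : f y = f x)
    (hLI : LinearIndependent ℝ ![g x, g y])
    (xp : EuclideanSpace ℝ (Fin n))
    (hmem : ∃ α β : ℝ, xp = x + α • g x + β • g y)
    (hpmin : ∀ α β : ℝ, f xp ≤ f (x + α • g x + β • g y)) :
    f xp - f xs ≤
      ((L / μ - 1) / (L / μ + 1) -
        Real.sin (InnerProductGeometry.angle (g x) (g y)) ^ 2 / (4 * (L / μ) ^ 2)) *
        (f x - f xs) :=
  stmt_19_general f g μ L hμ hμL hgrad hsc hsmooth xs x t y hy hlevel xp hpmin
end
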